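/- For all 2D grid functions ω, ν in W_h, the compact operator ℋ and the compact discrete Laplacian Φ are mutually adjoint in the sense that ⟨ℋω, Φν⟩ = ⟨Φω, ℋν⟩. -/

import Mathlib

open Finset

noncomputable section

/-- spatial mesh size `1/(2J)` -/
def msh (J : ℕ) : ℝ := 1 / (2 * (J : ℝ))

/-- 2D discrete inner product -/
def gridIP2 (J₁ J₂ : ℕ) (ω ν : ℕ → ℕ → ℝ) : ℝ :=
  msh J₁ * msh J₂ *
    ∑ i ∈ Finset.Icc 1 (2 * J₁ - 1), ∑ j ∈ Finset.Icc 1 (2 * J₂ - 1), ω i j * ν i j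

/-- 2D discrete `L²` norm -/
def gridNorm2 (J₁ J₂ : ℕ) (ω : ℕ → ℕ → ℝ) : ℝ :=
  Real.sqrt (gridIP2 J₁ J₂ ω ω)

/-- the 2D norm `‖ω‖_E` -/
def gridNormE (J₁ J₂ : ℕ) (ω : ℕ → ℕ → ℝ) : ℝ :=
  2 / 3 * Real.sqrt (msh J₁ * msh J₂ *
    ∑ i ∈ Finset.Icc 1 J₁, ∑ j ∈ Finset.Icc 1 J₂,
      (ω (2 * i - 2) (2 * j - 1) ^ 2 + ω (2 * i - 1) (2 * j - 2) ^ 2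
        + 3 * ω (2 * i - 1) (2 * j - 1) ^ 2))

/-- the 2D norm `‖ω‖_F = √((4/9)‖ω‖² + ‖ω‖_E²)` -/
def gridNormF (J₁ J₂ : ℕ) (ω : ℕ → ℕ → ℝ) : ℝ :=
  Real.sqrt (4 / 9 * gridNorm2 J₁ J₂ ω ^ 2 + gridNormE J₁ J₂ ω ^ 2)

/-- compact operator `𝒜` in the `x`-direction (interior formula) -/
def cA2 (ω : ℕ → ℕ → ℝ) (i j : ℕ) : ℝ := (ω (i + 1) j + 10 * ω i j + ω (i - 1) j) / 12

/-- compact operator `ℬ` in the `y`-direction (interior formula) -/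
def cB2 (ω : ℕ → ℕ → ℝ) (i j : ℕ) : ℝ := (ω i (j + 1) + 10 * ω i j + ω i (j - 1)) / 12

/-- compact operator `ℋ = 𝒜ℬ` -/
def cH (ω : ℕ → ℕ → ℝ) : ℕ → ℕ → ℝ := cA2 (cB2 ω)

/-- second difference `δ_xδ_x̄` -/
def dxx2 (J₁ : ℕ) (ω : ℕ → ℕ → ℝ) (i j : ℕ) : ℝ :=
  (ω (i + 1) j - 2 * ω i j + ω (i - 1) j) / msh J₁ ^ 2

/-- second difference `δ_yδ_ȳ` -/
def dyy2 (J₂ : ℕ) (ω : ℕ → ℕ → ℝ) (i j : ℕ) : ℝ :=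
  (ω i (j + 1) - 2 * ω i j + ω i (j - 1)) / msh J₂ ^ 2

/-- compact discrete Laplacian `Φ = ℬδ_xδ_x̄ + 𝒜δ_yδ_ȳ` -/
def cPhi (J₁ J₂ : ℕ) (ω : ℕ → ℕ → ℝ) (i j : ℕ) : ℝ :=
  cB2 (dxx2 J₁ ω) i j + cA2 (dyy2 J₂ ω) i j

/-- membership in `W_h`: vanishing on the boundary indices -/
def memWh (J₁ J₂ : ℕ) (ω : ℕ → ℕ → ℝ) : Prop :=
  ∀ i j : ℕ, (i = 0 ∨ i = 2 * J₁ ∨ j = 0 ∨ j = 2 * J₂) → ω i j = 0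

/-!
Each of `𝒜`, `δ_xδ_x̄` is a symmetric three-point stencil in `i`, and each of `ℬ`, `δ_yδ_ȳ` one
in `j`. Two symmetric stencils in the same direction are mutually adjoint on functions vanishing
on that direction's boundary, by a discrete Green identity; stencils in different directions
commute and preserve each other's boundary condition. Hence
`⟨𝒜ℬω, ℬδ_xδ_x̄ν⟩ = ⟨δ_xδ_x̄ℬω, 𝒜ℬν⟩ = ⟨ℬδ_xδ_x̄ω, ℋν⟩` and likewise
`⟨𝒜ℬω, 𝒜δ_yδ_ȳν⟩ = ⟨𝒜δ_yδ_ȳω, ℋν⟩`; adding the two gives the claim.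
-/

lemma sum_Icc_discrete_green (f g : ℕ → ℝ) (M : ℕ) :
    ∑ i ∈ Icc 1 M, ((f (i + 1) + f (i - 1)) * g i - f i * (g (i + 1) + g (i - 1)))
      = (f (M + 1) * g M - f M * g (M + 1)) - (f 1 * g 0 - f 0 * g 1) := by
  induction M with
  | zero => simp
  | succ n ih =>
    rw [sum_Icc_succ_top (by omega), ih]
    simp only [Nat.add_sub_cancel]
    ring

def stencil3 (α β : ℝ) (f : ℕ → ℝ) (i : ℕ) : ℝ := α * (f (i + 1) + f (i - 1)) + β * f i

/-- The difference of the two sides is `(α δ - β γ)` times a discrete Green sum. -/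
lemma sum_stencil3_mul_stencil3_comm (α β γ δ : ℝ) {f g : ℕ → ℝ} {M : ℕ}
    (hf₀ : f 0 = 0) (hf₁ : f (M + 1) = 0) (hg₀ : g 0 = 0) (hg₁ : g (M + 1) = 0) :
    ∑ i ∈ Icc 1 M, stencil3 α β f i * stencil3 γ δ g i
      = ∑ i ∈ Icc 1 M, stencil3 γ δ f i * stencil3 α β g i := by
  have green := sum_Icc_discrete_green f g M
  rw [hf₀, hf₁, hg₀, hg₁] at green
  rw [← sub_eq_zero, ← sum_sub_distrib]
  calc ∑ i ∈ Icc 1 M, (stencil3 α β f i * stencil3 γ δ g i - stencil3 γ δ f i * stencil3 α β g i)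
      = (α * δ - β * γ) *
          ∑ i ∈ Icc 1 M, ((f (i + 1) + f (i - 1)) * g i - f i * (g (i + 1) + g (i - 1))) := by
        rw [mul_sum]
        exact sum_congr rfl fun i _ => by unfold stencil3; ring
    _ = 0 := by rw [green]; ring

def stencilX (α β : ℝ) (f : ℕ → ℕ → ℝ) (i j : ℕ) : ℝ := stencil3 α β (fun k => f k j) i

def stencilY (α β : ℝ) (f : ℕ → ℕ → ℝ) (i j : ℕ) : ℝ := stencil3 α β (f i) j

lemma stencilX_stencilY_comm (α β γ δ : ℝ) (f : ℕ → ℕ → ℝ) :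
    stencilX α β (stencilY γ δ f) = stencilY γ δ (stencilX α β f) := by
  funext i j
  simp only [stencilX, stencilY, stencil3]
  ring

lemma cA2_eq_stencilX : cA2 = stencilX (1 / 12) (10 / 12) := by
  funext f i j
  simp only [cA2, stencilX, stencil3]
  ring

lemma cB2_eq_stencilY : cB2 = stencilY (1 / 12) (10 / 12) := by
  funext f i j
  simp only [cB2, stencilY, stencil3]
  ring

lemma dxx2_eq_stencilX (J₁ : ℕ) : dxx2 J₁ = stencilX (1 / msh J₁ ^ 2) (-2 / msh J₁ ^ 2) := by
  funext f i j
  simp only [dxx2, stencilX, stencil3]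
  ring

lemma dyy2_eq_stencilY (J₂ : ℕ) : dyy2 J₂ = stencilY (1 / msh J₂ ^ 2) (-2 / msh J₂ ^ 2) := by
  funext f i j
  simp only [dyy2, stencilY, stencil3]
  ring

def ZeroOnXBoundary (J₁ : ℕ) (f : ℕ → ℕ → ℝ) : Prop := ∀ j, f 0 j = 0 ∧ f (2 * J₁) j = 0

def ZeroOnYBoundary (J₂ : ℕ) (f : ℕ → ℕ → ℝ) : Prop := ∀ i, f i 0 = 0 ∧ f i (2 * J₂) = 0

lemma memWh.zeroOnXBoundary {J₁ J₂ : ℕ} {f : ℕ → ℕ → ℝ} (hf : memWh J₁ J₂ f) :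
    ZeroOnXBoundary J₁ f :=
  fun j => ⟨hf 0 j (by simp), hf (2 * J₁) j (by simp)⟩

lemma memWh.zeroOnYBoundary {J₁ J₂ : ℕ} {f : ℕ → ℕ → ℝ} (hf : memWh J₁ J₂ f) :
    ZeroOnYBoundary J₂ f :=
  fun i => ⟨hf i 0 (by simp), hf i (2 * J₂) (by simp)⟩

lemma ZeroOnXBoundary.stencilY {J₁ : ℕ} {f : ℕ → ℕ → ℝ} (hf : ZeroOnXBoundary J₁ f) (α β : ℝ) :
    ZeroOnXBoundary J₁ (stencilY α β f) :=
  fun j => by simp [_root_.stencilY, stencil3, (hf _).1, (hf _).2]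

lemma ZeroOnYBoundary.stencilX {J₂ : ℕ} {f : ℕ → ℕ → ℝ} (hf : ZeroOnYBoundary J₂ f) (α β : ℝ) :
    ZeroOnYBoundary J₂ (stencilX α β f) :=
  fun i => by simp [_root_.stencilX, stencil3, (hf _).1, (hf _).2]

lemma gridIP2_add_left (J₁ J₂ : ℕ) (f g h : ℕ → ℕ → ℝ) :
    gridIP2 J₁ J₂ (f + g) h = gridIP2 J₁ J₂ f h + gridIP2 J₁ J₂ g h := by
  simp only [gridIP2, Pi.add_apply, add_mul, sum_add_distrib, mul_add]

lemma gridIP2_add_right (J₁ J₂ : ℕ) (f g h : ℕ → ℕ → ℝ) :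
    gridIP2 J₁ J₂ f (g + h) = gridIP2 J₁ J₂ f g + gridIP2 J₁ J₂ f h := by
  simp only [gridIP2, Pi.add_apply, mul_add, sum_add_distrib]

lemma gridIP2_stencilX_comm {J₁ : ℕ} (J₂ : ℕ) (hJ₁ : 0 < J₁) (α β γ δ : ℝ)
    {f g : ℕ → ℕ → ℝ} (hf : ZeroOnXBoundary J₁ f) (hg : ZeroOnXBoundary J₁ g) :
    gridIP2 J₁ J₂ (stencilX α β f) (stencilX γ δ g)
      = gridIP2 J₁ J₂ (stencilX γ δ f) (stencilX α β g) := by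
  have hN : 2 * J₁ - 1 + 1 = 2 * J₁ := by omega
  unfold gridIP2
  rw [sum_comm, sum_comm (s := Icc 1 (2 * J₁ - 1))]
  congr 1
  refine sum_congr rfl fun j _ => ?_
  exact sum_stencil3_mul_stencil3_comm α β γ δ (hf j).1 (hN ▸ (hf j).2) (hg j).1 (hN ▸ (hg j).2)

lemma gridIP2_stencilY_comm (J₁ : ℕ) {J₂ : ℕ} (hJ₂ : 0 < J₂) (α β γ δ : ℝ)
    {f g : ℕ → ℕ → ℝ} (hf : ZeroOnYBoundary J₂ f) (hg : ZeroOnYBoundary J₂ g) :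
    gridIP2 J₁ J₂ (stencilY α β f) (stencilY γ δ g)
      = gridIP2 J₁ J₂ (stencilY γ δ f) (stencilY α β g) := by
  have hN : 2 * J₂ - 1 + 1 = 2 * J₂ := by omega
  unfold gridIP2
  congr 1
  refine sum_congr rfl fun i _ => ?_
  exact sum_stencil3_mul_stencil3_comm α β γ δ (hf i).1 (hN ▸ (hf i).2) (hg i).1 (hN ▸ (hg i).2)

/-- `⟨ℋω, Φν⟩ = ⟨Φω, ℋν⟩` for all `ω, ν ∈ W_h`. -/
theorem stmt_16 (J₁ J₂ : ℕ) (hJ₁ : 0 < J₁) (hJ₂ : 0 < J₂)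
    (ω ν : ℕ → ℕ → ℝ) (hω : memWh J₁ J₂ ω) (hν : memWh J₁ J₂ ν) :
    gridIP2 J₁ J₂ (cH ω) (cPhi J₁ J₂ ν) = gridIP2 J₁ J₂ (cPhi J₁ J₂ ω) (cH ν) := by
  have hPhi (f : ℕ → ℕ → ℝ) : cPhi J₁ J₂ f = cB2 (dxx2 J₁ f) + cA2 (dyy2 J₂ f) := rfl
  simp only [cH, hPhi, gridIP2_add_left, gridIP2_add_right, cA2_eq_stencilX, cB2_eq_stencilY,
    dxx2_eq_stencilX, dyy2_eq_stencilY]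
  congr 1
  · rw [← stencilX_stencilY_comm _ _ _ _ ν, gridIP2_stencilX_comm J₂ hJ₁ _ _ _ _
      (hω.zeroOnXBoundary.stencilY _ _) (hν.zeroOnXBoundary.stencilY _ _), stencilX_stencilY_comm]
  · rw [stencilX_stencilY_comm _ _ _ _ ω, stencilX_stencilY_comm _ _ _ _ ν,
      gridIP2_stencilY_comm J₁ hJ₂ _ _ _ _ (hω.zeroOnYBoundary.stencilX _ _)
        (hν.zeroOnYBoundary.stencilX _ _),
      ← stencilX_stencilY_comm _ _ _ _ ω, ← stencilX_stencilY_comm _ _ _ _ ν]
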